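/- arXiv:1108.1763 — 3 statements merged into one kernel-verified Lean document; each statement's English description precedes it below -/
import Mathlib

section
/- For every x in the projective line over a finite field of characteristic 3, θ(x) = ψ(s(ψ(x))), i.e., the map θ is conjugate via ψ to the inverse-square map s. -/
open OnePoint

variable (F : Type*) [Field F] [DecidableEq F]

/-- The map `θ(x) = x + x⁻¹`, with `θ(0) = θ(∞) = ∞`. -/
def theta : OnePoint F → OnePoint F
  | Option.some x => if x = 0 then ∞ else Option.some (x + x⁻¹)
  | Option.none => ∞

/-- The inverse-square map `s(x) = x⁻²`, with `s(0) = ∞`, `s(∞) = 0`. -/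
def sMap : OnePoint F → OnePoint F
  | Option.some x => if x = 0 then ∞ else Option.some (x⁻¹ ^ 2)
  | Option.none => Option.some 0

/-- The involution `ψ(x) = (x+1)/(x-1)`, with `ψ(1) = ∞`, `ψ(∞) = 1`. -/
def psi : OnePoint F → OnePoint F
  | Option.some x => if x = 1 then ∞ else Option.some ((x + 1) / (x - 1))
  | Option.none => Option.some 1

/-! With `c = ((a - 1) / (a + 1))²` the point `ψ(s(ψ(a)))` is `(c + 1) / (c - 1) = -(a² + 1) / (2a)`
as soon as `2 ≠ 0`; in characteristic 3 one has `-1/2 = 1`, so this is `a + a⁻¹ = θ(a)`. The four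
points `0, ±1, ∞`, where some map passes through `∞`, are checked by hand. -/

section MapValues

variable {F}

lemma theta_infty : theta F ∞ = ∞ := rfl

lemma theta_zero : theta F ((0 : F) : OnePoint F) = ∞ := if_pos rfl

lemma theta_coe_of_ne_zero {a : F} (ha : a ≠ 0) :
    theta F (a : OnePoint F) = ((a + a⁻¹ : F) : OnePoint F) := if_neg ha

lemma sMap_infty : sMap F ∞ = ((0 : F) : OnePoint F) := rfl

lemma sMap_zero : sMap F ((0 : F) : OnePoint F) = ∞ := if_pos rfl

lemma sMap_coe_of_ne_zero {a : F} (ha : a ≠ 0) :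
    sMap F (a : OnePoint F) = ((a⁻¹ ^ 2 : F) : OnePoint F) := if_neg ha

lemma sMap_one : sMap F ((1 : F) : OnePoint F) = ((1 : F) : OnePoint F) := by
  rw [sMap_coe_of_ne_zero one_ne_zero, inv_one, one_pow]

lemma sMap_neg_one : sMap F ((-1 : F) : OnePoint F) = ((1 : F) : OnePoint F) := by
  rw [sMap_coe_of_ne_zero (neg_ne_zero.mpr one_ne_zero), inv_neg_one, neg_one_sq]

lemma psi_infty : psi F ∞ = ((1 : F) : OnePoint F) := rfl

lemma psi_one : psi F ((1 : F) : OnePoint F) = ∞ := if_pos rfl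

lemma psi_coe_of_ne_one {a : F} (ha : a ≠ 1) :
    psi F (a : OnePoint F) = (((a + 1) / (a - 1) : F) : OnePoint F) := if_neg ha

lemma psi_zero : psi F ((0 : F) : OnePoint F) = ((-1 : F) : OnePoint F) := by
  rw [psi_coe_of_ne_one zero_ne_one, zero_add, zero_sub, div_neg, div_one]

lemma psi_neg_one (h2 : (2 : F) ≠ 0) : psi F ((-1 : F) : OnePoint F) = ((0 : F) : OnePoint F) := by
  have h : (-1 : F) ≠ 1 := fun h ↦ h2 (by linear_combination -h)
  rw [psi_coe_of_ne_one h, neg_add_cancel, zero_div]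

end MapValues

section CayleyTransform

variable {K : Type*} [Field K] {a : K}

lemma four_ne_zero_of_two_ne_zero (h2 : (2 : K) ≠ 0) : (4 : K) ≠ 0 := by
  rw [show (4 : K) = 2 * 2 by norm_num]
  exact mul_ne_zero h2 h2

lemma sub_one_div_add_one_sq_sub_one (hadd : a + 1 ≠ 0) :
    ((a - 1) / (a + 1)) ^ 2 - 1 = -(4 * a) / (a + 1) ^ 2 := by
  field_simp
  ring

lemma sub_one_div_add_one_sq_ne_one (h2 : (2 : K) ≠ 0) (ha : a ≠ 0) (hadd : a + 1 ≠ 0) :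
    ((a - 1) / (a + 1)) ^ 2 ≠ 1 := by
  rw [← sub_ne_zero, sub_one_div_add_one_sq_sub_one hadd]
  exact div_ne_zero (neg_ne_zero.mpr (mul_ne_zero (four_ne_zero_of_two_ne_zero h2) ha))
    (pow_ne_zero 2 hadd)

lemma add_one_div_sub_one_of_sub_one_div_add_one_sq (h2 : (2 : K) ≠ 0) (ha : a ≠ 0)
    (hadd : a + 1 ≠ 0) :
    (((a - 1) / (a + 1)) ^ 2 + 1) / (((a - 1) / (a + 1)) ^ 2 - 1) = -(a ^ 2 + 1) / (2 * a) := by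
  have h4 := four_ne_zero_of_two_ne_zero h2
  rw [sub_one_div_add_one_sq_sub_one hadd]
  field_simp
  ring

end CayleyTransform

section CharThree

variable {R : Type*} [CommRing R] [CharP R 3]

lemma two_eq_neg_one_of_charP_three : (2 : R) = -1 := by
  have h3 : (3 : R) = 0 := by exact_mod_cast CharP.cast_eq_zero R 3
  linear_combination h3

lemma neg_two_eq_one_of_charP_three : (-2 : R) = 1 := by
  rw [two_eq_neg_one_of_charP_three, neg_neg]

lemma two_ne_zero_of_charP_three [Nontrivial R] : (2 : R) ≠ 0 := by
  rw [two_eq_neg_one_of_charP_three]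
  exact neg_ne_zero.mpr one_ne_zero

end CharThree

lemma neg_div_two_mul_eq_add_inv_of_charP_three {K : Type*} [Field K] [CharP K 3] (a : K) :
    -(a ^ 2 + 1) / (2 * a) = a + a⁻¹ := by
  rw [two_eq_neg_one_of_charP_three, neg_one_mul, neg_div_neg_eq, add_div, sq,
    mul_self_div_self, one_div]

theorem theta_eq_psi_s_psi [CharP F 3] (x : OnePoint F) :
    theta F x = psi F (sMap F (psi F x)) := by
  have h2 : (2 : F) ≠ 0 := two_ne_zero_of_charP_three
  cases x with
  | infty => rw [theta_infty, psi_infty, sMap_one, psi_one]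
  | coe a =>
    by_cases ha0 : a = 0
    · rw [ha0, theta_zero, psi_zero, sMap_neg_one, psi_one]
    by_cases ha1 : a = 1
    · rw [ha1, theta_coe_of_ne_zero one_ne_zero, psi_one, sMap_infty, psi_zero, inv_one,
        one_add_one_eq_two, two_eq_neg_one_of_charP_three]
    by_cases hneg : a = -1
    · rw [hneg, theta_coe_of_ne_zero (neg_ne_zero.mpr one_ne_zero), psi_neg_one h2, sMap_zero,
        psi_infty, inv_neg_one, ← neg_add, one_add_one_eq_two, neg_two_eq_one_of_charP_three]
    have hsub : a - 1 ≠ 0 := sub_ne_zero.mpr ha1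
    have hadd : a + 1 ≠ 0 := fun h ↦ hneg (eq_neg_of_add_eq_zero_left h)
    rw [theta_coe_of_ne_zero ha0, psi_coe_of_ne_one ha1,
      sMap_coe_of_ne_zero (div_ne_zero hadd hsub), inv_div,
      psi_coe_of_ne_one (sub_one_div_add_one_sq_ne_one h2 ha0 hadd),
      add_one_div_sub_one_of_sub_one_div_add_one_sq h2 ha0 hadd,
      neg_div_two_mul_eq_add_inv_of_charP_three]
end

section
/- Let α ∈ P¹(F_{3^n}) \ {−1, 1, ∞}. Then θ^k(α) = α for a positive integer k if and only if s^k(ψ(α)) = ψ(α), i.e., α is θ-periodic of period k if and only if ψ(α) is s-periodic of period k. -/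
open OnePoint

variable (F : Type*) [Field F] [DecidableEq F]

/-! In characteristic 3 we have `x² ± x + 1 = (x ∓ 1)²`, so
`ψ(θ x) = (x² + x + 1)/(x² - x + 1) = ((x - 1)/(x + 1))² = s(ψ x)`: the involution `ψ`
conjugates `θ` to `s`, hence carries the periodic points of `θ` bijectively onto those of `s`,
period by period. -/

theorem three_eq_zero_of_card_eq_three_pow {K : Type*} [Field K] [Fintype K] {n : ℕ} (hn : 0 < n)
    (hK : Fintype.card K = 3 ^ n) : (3 : K) = 0 := by
  have hcard : ((3 ^ n : ℕ) : K) = 0 := hK ▸ FiniteField.cast_card_eq_zero K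
  push_cast at hcard
  exact pow_eq_zero_iff hn.ne' |>.mp hcard

theorem two_ne_zero_of_three_eq_zero {K : Type*} [Field K] (h3 : (3 : K) = 0) :
    (2 : K) ≠ 0 := fun h2 =>
  one_ne_zero (by linear_combination h3 - h2)

variable {F}

theorem psi_involutive (h2 : (2 : F) ≠ 0) : Function.Involutive (psi F) := by
  rintro (_ | x)
  · simp [psi]; rfl
  by_cases hx : x = 1
  · simp [psi, hx]; rfl
  have hx1 : x - 1 ≠ 0 := sub_ne_zero.mpr hx
  have hne : (x + 1) / (x - 1) ≠ 1 := fun h =>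
    h2 (by linear_combination (div_eq_one_iff_eq hx1).mp h)
  simp only [psi, hx, hne, ↓reduceIte]
  congr 1
  field_simp
  rw [show x + 1 + (x - 1) = 2 * x by ring, show x + 1 - (x - 1) = 2 by ring,
    mul_div_cancel_left₀ x h2]

theorem add_inv_sub_one_eq {K : Type*} [Field K] (h3 : (3 : K) = 0) {x : K} (hx : x ≠ 0) :
    x + x⁻¹ - 1 = (x + 1) ^ 2 / x := by
  field_simp
  linear_combination -x * h3

theorem add_inv_add_one_eq {K : Type*} [Field K] (h3 : (3 : K) = 0) {x : K} (hx : x ≠ 0) :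
    x + x⁻¹ + 1 = (x - 1) ^ 2 / x := by
  field_simp
  linear_combination x * h3

theorem psi_theta_of_ne (h3 : (3 : F) = 0) {x : F} (h0 : x ≠ 0) (h1 : x ≠ 1) (hm1 : x ≠ -1) :
    psi F (theta F x) = sMap F (psi F x) := by
  have hx1 : x - 1 ≠ 0 := sub_ne_zero.mpr h1
  have hx1' : x + 1 ≠ 0 := fun h => hm1 (eq_neg_of_add_eq_zero_left h)
  have hθ : x + x⁻¹ - 1 ≠ 0 := by
    rw [add_inv_sub_one_eq h3 h0]
    exact div_ne_zero (pow_ne_zero 2 hx1') h0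
  have hψ : (x + 1) / (x - 1) ≠ 0 := div_ne_zero hx1' hx1
  simp only [theta, psi, sMap, h0, h1, sub_ne_zero.mp hθ, hψ, ↓reduceIte]
  congr 1
  rw [add_inv_add_one_eq h3 h0, add_inv_sub_one_eq h3 h0]
  field_simp

theorem semiconj_psi_theta_sMap (h3 : (3 : F) = 0) :
    Function.Semiconj (psi F) (theta F) (sMap F) := by
  have h2 := two_ne_zero_of_three_eq_zero h3
  rintro (_ | x)
  · simp [psi, theta, sMap]; rfl
  by_cases h0 : x = 0
  · subst h0
    simp [psi, theta, sMap]; rfl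
  by_cases h1 : x = 1
  · -- `θ(1) = 2 = -1`
    subst h1
    have h21 : (2 : F) ≠ 1 := fun h => one_ne_zero (by linear_combination h)
    simp only [theta, psi, sMap, one_ne_zero, show (1 : F) + 1⁻¹ = 2 by norm_num, h21,
      ↓reduceIte]
    congr 1
    rw [show (2 : F) + 1 = 0 by linear_combination h3, zero_div]
  by_cases hm1 : x = -1
  · -- `θ(-1) = -2 = 1`
    subst hm1
    have hm1' : (-1 : F) ≠ 1 := fun h => h2 (by linear_combination -h)
    have hθ : (-1 : F) + -1 = 1 := by linear_combination -h3
    simp [theta, psi, sMap, hθ, hm1']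
  exact psi_theta_of_ne h3 h0 h1 hm1

theorem theta_periodic_iff_s_periodic_general [Fintype F] (n : ℕ) (hn : 0 < n)
    (hF : Fintype.card F = 3 ^ n)
    (α : OnePoint F)
    (k : ℕ) :
    (theta F)^[k] α = α ↔ (sMap F)^[k] (psi F α) = psi F α := by
  have h3 : (3 : F) = 0 := three_eq_zero_of_card_eq_three_pow hn hF
  have hψ := (psi_involutive (two_ne_zero_of_three_eq_zero h3)).injective
  rw [← hψ.eq_iff, (semiconj_psi_theta_sMap h3).iterate_right k α]

theorem theta_periodic_iff_s_periodic [Fintype F] (n : ℕ) (hn : 0 < n)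
    (hF : Fintype.card F = 3 ^ n)
    (α : OnePoint F) (hα1 : α ≠ ((1 : F) : OnePoint F))
    (hα2 : α ≠ ((-1 : F) : OnePoint F)) (hα3 : α ≠ ∞)
    (k : ℕ) (hk : 0 < k) :
    (theta F)^[k] α = α ↔ (sMap F)^[k] (psi F α) = psi F α :=
  theta_periodic_iff_s_periodic_general n hn hF α k
end

section
/- The θ-periodic points of P¹(F_{3^n}) are exactly ∞, 1, −1, and the elements α with ψ(α) of odd multiplicative order; their total count is (3^n−1)/2^e + 2, where 2^e ∥ 3^n − 1. -/
open OnePoint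

variable (F : Type*) [Field F] [DecidableEq F]

set_option linter.unusedSectionVars false

variable {F}

@[simp]
lemma op_some_inj {a b : F} : @Eq (OnePoint F) (Option.some a) (Option.some b) ↔ a = b :=
  Option.some_inj

lemma psi_some_ne {a : F} (h : a ≠ 1) :
    psi F (Option.some a) = Option.some ((a + 1) / (a - 1)) := if_neg h

lemma sMap_some_ne {a : F} (h : a ≠ 0) :
    sMap F (Option.some a) = Option.some (a⁻¹ ^ 2) := if_neg h

lemma theta_some_ne {a : F} (h : a ≠ 0) :
    theta F (Option.some a) = Option.some (a + a⁻¹) := if_neg h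

lemma two_ne (h3 : (3:F) = 0) : (2:F) ≠ 0 := by
  intro h2
  exact one_ne_zero (by linear_combination h3 - h2 : (1:F) = 0)

lemma psi_psi (h3 : (3:F) = 0) (x : OnePoint F) : psi F (psi F x) = x := by
  match x with
  | Option.none => simp [psi]; rfl
  | Option.some a =>
    by_cases ha : a = 1
    · simp [psi, ha]
    · have hsub : a - 1 ≠ 0 := sub_ne_zero.2 ha
      have hb : (a + 1) / (a - 1) ≠ 1 := by
        intro h
        rw [div_eq_one_iff_eq hsub] at h
        exact two_ne h3 (by linear_combination h)
      rw [psi_some_ne ha, psi_some_ne hb]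
      congr 1
      have h2 : (1:F) + 1 ≠ 0 := by
        have := two_ne h3; rwa [show (2:F) = 1 + 1 by norm_num] at this
      field_simp
      rw [div_eq_iff (by ring_nf; exact two_ne h3)]
      ring

lemma psi_injective (h3 : (3:F) = 0) : Function.Injective (psi F) :=
  Function.LeftInverse.injective (psi_psi h3)

lemma theta_conj (h3 : (3:F) = 0) (x : OnePoint F) :
    theta F x = psi F (sMap F (psi F x)) := by
  have h2 := two_ne h3
  match x with
  | Option.none => simp [theta, sMap, psi]
  | Option.some a =>
    by_cases ha1 : a = 1
    · subst ha1
      have e1 : psi F (Option.some (1:F)) = ∞ := by simp [psi]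
      have e2 : sMap F ∞ = Option.some 0 := rfl
      have e3 : psi F (Option.some (0:F)) = Option.some (-1) := by
        simp [psi]
      rw [e1, e2, e3]
      have : theta F (Option.some (1:F)) = Option.some 2 := by
        simp [theta]; norm_num
      rw [this, op_some_inj]
      linear_combination h3
    · by_cases ham1 : a = -1
      · subst ham1
        have hne : (-1 : F) ≠ 1 := fun h => h2 (by linear_combination -h)
        have e1 : psi F (Option.some (-1:F)) = Option.some 0 := by
          simp [psi, hne]
        have e2 : sMap F (Option.some (0:F)) = ∞ := by simp [sMap]
        have e3 : psi F ∞ = Option.some 1 := rfl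
        rw [e1, e2, e3]
        have : theta F (Option.some (-1:F)) = Option.some (-2) := by
          simp [theta]; norm_num
        rw [this, op_some_inj]
        linear_combination -h3
      · by_cases ha0 : a = 0
        · subst ha0
          have e1 : psi F (Option.some (0:F)) = Option.some (-1) := by simp [psi]
          have e2 : sMap F (Option.some (-1:F)) = Option.some 1 := by
            simp [sMap]
          have e3 : psi F (Option.some (1:F)) = ∞ := by simp [psi]
          rw [e1, e2, e3]
          simp [theta]
        · have ha0' : a ≠ 0 := ha0
          have hs1 : a - 1 ≠ 0 := sub_ne_zero.2 ha1
          have hs2 : a + 1 ≠ 0 := fun h => ham1 (by linear_combination h)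
          have hb0 : (a + 1) / (a - 1) ≠ 0 := div_ne_zero hs2 hs1
          have hbsq : ((a + 1) / (a - 1))⁻¹ ^ 2 ≠ 1 := by
            intro h
            rw [inv_pow, inv_eq_one, div_pow, div_eq_one_iff_eq (pow_ne_zero 2 hs1)] at h
            have h4 : (4:F) * a = 0 := by linear_combination h
            have h41 : (4:F) = 1 := by linear_combination h3
            rw [h41, one_mul] at h4
            exact ha0 h4
          have e1 : psi F (Option.some a) = Option.some ((a+1)/(a-1)) := by
            simp [psi, ha1]
          have e2 : sMap F (Option.some ((a+1)/(a-1))) =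
              Option.some (((a+1)/(a-1))⁻¹ ^ 2) := by simp [sMap, hb0]
          have e3 : psi F (Option.some (((a+1)/(a-1))⁻¹ ^ 2)) =
              Option.some ((((a+1)/(a-1))⁻¹ ^ 2 + 1) / (((a+1)/(a-1))⁻¹ ^ 2 - 1)) := by
            simp only [psi]
            exact if_neg hbsq
          have e0 : theta F (Option.some a) = Option.some (a + a⁻¹) := by
            simp [theta, ha0']
          rw [e0, e1, e2, e3, op_some_inj]
          have hD : ((a + 1) / (a - 1))⁻¹ ^ 2 - 1 ≠ 0 := sub_ne_zero.2 hbsq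
          rw [eq_div_iff hD, inv_div, div_pow]
          field_simp
          linear_combination (-2*a - 2*a^3) * h3

lemma sMap_iterate (k : ℕ) (x : F) (hx : x ≠ 0) :
    (sMap F)^[k] (Option.some x) = Option.some (x ^ ((-2:ℤ)^k)) := by
  induction k with
  | zero => simp; rfl
  | succ k ih =>
    rw [Function.iterate_succ_apply' (sMap F) k (Option.some x : OnePoint F), ih]
    have hxe : x ^ ((-2:ℤ)^k) ≠ 0 := zpow_ne_zero _ hx
    rw [sMap_some_ne hxe]
    congr 1
    rw [inv_pow, ← zpow_natCast (x ^ ((-2:ℤ)^k)) 2, ← zpow_neg, ← zpow_mul, pow_succ]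
    norm_num

lemma zpow_periodic_iff_odd [Fintype F] (a : F) (ha : a ≠ 0) :
    (∃ k : ℕ, 0 < k ∧ a ^ ((-2:ℤ)^k) = a) ↔ Odd (orderOf a) := by
  obtain ⟨u, hu⟩ := (isUnit_iff_ne_zero.2 ha)
  have horda : orderOf a = orderOf u := by rw [← hu, orderOf_units]
  constructor
  · rintro ⟨k, hk, h⟩
    have hh : a ^ ((-2:ℤ)^k - 1) = 1 := by
      rw [zpow_sub₀ ha, h, zpow_one, div_self ha]
    have hu1 : u ^ ((-2:ℤ)^k - 1) = 1 := by
      ext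
      rw [Units.val_zpow_eq_zpow_val, hu, hh, Units.val_one]
    have hdvd : (orderOf u : ℤ) ∣ (-2:ℤ)^k - 1 := orderOf_dvd_iff_zpow_eq_one.2 hu1
    have heven : Even ((-2:ℤ)^k) := by
      obtain ⟨k', rfl⟩ := Nat.exists_eq_succ_of_ne_zero hk.ne'
      exact ⟨-((-2)^k'), by rw [pow_succ]; ring⟩
    have hodd : Odd ((-2:ℤ)^k - 1) := Even.sub_odd heven odd_one
    rw [horda]
    by_contra hcon
    rw [Nat.not_odd_iff_even] at hcon
    have h2 : (2:ℤ) ∣ (orderOf u : ℤ) := by exact_mod_cast hcon.two_dvd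
    obtain ⟨c, hc⟩ := h2.trans hdvd
    exact (Int.not_odd_iff_even.2 ⟨c, by rw [hc]; ring⟩) hodd
  · intro hodd
    rw [horda] at hodd
    set d := orderOf u with hd
    have hd0 : 0 < d := orderOf_pos u
    have hcop : Nat.Coprime 2 d := Nat.coprime_two_left.2 hodd
    set k := 2 * Nat.totient d with hk
    have hk0 : 0 < k := Nat.mul_pos two_pos (Nat.totient_pos.2 hd0)
    have heuler : 2 ^ Nat.totient d ≡ 1 [MOD d] := Nat.ModEq.pow_totient hcop
    have h2k : 2 ^ k ≡ 1 [MOD d] := by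
      rw [hk, mul_comm, pow_mul]
      calc (2 ^ Nat.totient d)^2 ≡ 1^2 [MOD d] := heuler.pow 2
        _ = 1 := one_pow 2
    have hdvd : d ∣ 2 ^ k - 1 := (Nat.modEq_iff_dvd' Nat.one_le_two_pow).1 h2k.symm
    have hupow : u ^ (2 ^ k) = u := by
      conv_rhs => rw [← pow_one u]
      rw [← Nat.sub_add_cancel (Nat.one_le_two_pow : 1 ≤ 2 ^ k), pow_add, pow_one,
        orderOf_dvd_iff_pow_eq_one.1 hdvd, one_mul]
    refine ⟨k, hk0, ?_⟩
    have hneg : ((-2:ℤ))^k = ((2 ^ k : ℕ) : ℤ) := by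
      rw [Even.neg_pow ⟨Nat.totient d, by rw [hk]; ring⟩]
      push_cast
      ring
    rw [hneg, zpow_natCast, ← hu, ← Units.val_pow_eq_pow_val, hupow]

lemma not_odd_orderOf_zero : ¬ Odd (orderOf (0:F)) := by
  intro h
  have h0 : orderOf (0:F) ≠ 0 := by
    rintro h0; rw [h0] at h; exact (Nat.not_odd_iff_even.2 Even.zero) h
  have hfin : IsOfFinOrder (0:F) := orderOf_pos_iff.1 (Nat.pos_of_ne_zero h0)
  obtain ⟨k, hk, hk1⟩ := hfin.exists_pow_eq_one
  rw [zero_pow hk.ne'] at hk1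
  exact zero_ne_one hk1

lemma sPer_eq [Fintype F] :
    {x : OnePoint F | ∃ k : ℕ, 0 < k ∧ (sMap F)^[k] x = x}
      = {∞, Option.some 0} ∪ (Option.some '' {x : F | Odd (orderOf x)}) := by
  have hswap : (sMap F)^[2] ∞ = ∞ := by
    simp [Function.iterate_succ, sMap]
  have hswap0 : (sMap F)^[2] (Option.some (0:F)) = Option.some 0 := by
    show sMap F (sMap F (Option.some 0)) = _
    rw [show sMap F (Option.some (0:F)) = ∞ from if_pos rfl]
    rfl
  apply Set.eq_of_subset_of_subset
  · rintro x ⟨k, hk, hfix⟩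
    match x with
    | Option.none => exact Or.inl (Set.mem_insert _ _)
    | Option.some a =>
      by_cases ha : a = 0
      · subst ha
        exact Or.inl (Set.mem_insert_of_mem _ rfl)
      · right
        rw [sMap_iterate k a ha, op_some_inj] at hfix
        exact ⟨a, (zpow_periodic_iff_odd a ha).1 ⟨k, hk, hfix⟩, rfl⟩
  · rintro x (h | ⟨b, hb, rfl⟩)
    · rcases h with h | h
      · exact h ▸ ⟨2, by norm_num, hswap⟩
      · exact h ▸ ⟨2, by norm_num, hswap0⟩
    · have hb0 : b ≠ 0 := fun h => not_odd_orderOf_zero (h ▸ hb)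
      obtain ⟨k, hk, hfix⟩ := (zpow_periodic_iff_odd b hb0).2 hb
      exact ⟨k, hk, by rw [sMap_iterate k b hb0, hfix]⟩

lemma theta_iterate (h3 : (3:F) = 0) (k : ℕ) (x : OnePoint F) :
    (theta F)^[k] x = psi F ((sMap F)^[k] (psi F x)) := by
  induction k generalizing x with
  | zero => simp [psi_psi h3]
  | succ k ih =>
    rw [Function.iterate_succ_apply, ih, theta_conj h3, psi_psi h3,
      Function.iterate_succ_apply]

lemma thetaPer_eq_psi_preimage [Fintype F] (h3 : (3:F) = 0) :
    {x : OnePoint F | ∃ k : ℕ, 0 < k ∧ (theta F)^[k] x = x}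
      = psi F '' {x : OnePoint F | ∃ k : ℕ, 0 < k ∧ (sMap F)^[k] x = x} := by
  ext x
  simp only [Set.mem_setOf_eq, Set.mem_image]
  constructor
  · rintro ⟨k, hk, hfix⟩
    refine ⟨psi F x, ⟨k, hk, ?_⟩, psi_psi h3 x⟩
    rw [theta_iterate h3] at hfix
    have := congrArg (psi F) hfix
    rwa [psi_psi h3] at this
  · rintro ⟨y, ⟨k, hk, hfix⟩, rfl⟩
    refine ⟨k, hk, ?_⟩
    rw [theta_iterate h3, psi_psi h3, hfix]

lemma odd_card [Fintype F] (n : ℕ) (hn : 0 < n)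
    (hF : Fintype.card F = 3 ^ n) (e : ℕ)
    (he : 2 ^ e ∣ 3 ^ n - 1 ∧ ¬ 2 ^ (e + 1) ∣ 3 ^ n - 1) :
    {x : F | Odd (orderOf x)}.ncard = (3 ^ n - 1) / 2 ^ e := by
  set N := 3 ^ n - 1 with hN
  set m := N / 2 ^ e with hm
  have hNpos : 0 < N := by
    have : (3:ℕ) ^ n ≥ 3 ^ 1 := Nat.pow_le_pow_right (by norm_num) hn
    omega
  have hNm : N = 2 ^ e * m := (Nat.mul_div_cancel' he.1).symm
  have hmodd : Odd m := by
    rcases Nat.even_or_odd m with hev | hodd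
    · obtain ⟨c, hc⟩ := hev
      exact absurd ⟨c, by rw [hNm, hc, pow_succ]; ring⟩ he.2
    · exact hodd
  have hm0 : m ≠ 0 := by intro h; rw [h] at hmodd; simp at hmodd
  have hcardU : Fintype.card Fˣ = N := by
    rw [Fintype.card_units, hF]
  -- the set equals the m-th roots of unity
  have hset : {x : F | Odd (orderOf x)} = ↑(Polynomial.nthRootsFinset m (1 : F)) := by
    ext x
    simp only [Set.mem_setOf_eq, Finset.coe_sort_coe, Finset.mem_coe,
      Polynomial.mem_nthRootsFinset (Nat.pos_of_ne_zero hm0) (1 : F)]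
    constructor
    · intro hodd
      have hx0 : x ≠ 0 := fun h => not_odd_orderOf_zero (h ▸ hodd)
      obtain ⟨u, hu⟩ := isUnit_iff_ne_zero.2 hx0
      have horda : orderOf x = orderOf u := by rw [← hu, orderOf_units]
      rw [horda] at hodd
      have hdvdN : orderOf u ∣ N := hcardU ▸ orderOf_dvd_card
      have hcop : Nat.Coprime (orderOf u) (2 ^ e) :=
        (Nat.coprime_two_right.2 hodd).pow_right e
      have hdvdm : orderOf u ∣ m := hcop.dvd_of_dvd_mul_left (hNm ▸ hdvdN)
      have : u ^ m = 1 := orderOf_dvd_iff_pow_eq_one.1 hdvdm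
      calc x ^ m = ((u ^ m : Fˣ) : F) := by rw [Units.val_pow_eq_pow_val, hu]
        _ = 1 := by rw [this, Units.val_one]
    · intro hpow
      have hdvd : orderOf x ∣ m := orderOf_dvd_of_pow_eq_one hpow
      rcases Nat.even_or_odd (orderOf x) with hev | hodd
      · exfalso
        obtain ⟨c, hc⟩ := hev.two_dvd.trans hdvd
        rw [Nat.odd_iff] at hmodd
        omega
      · exact hodd
  rw [hset, Set.ncard_coe_finset]
  -- count m-th roots of unity via a primitive root
  have hmN : m ∣ N := Dvd.intro_left _ hNm.symm
  obtain ⟨g, hg⟩ := IsCyclic.exists_generator (α := Fˣ)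
  have hordg : orderOf g = N := by
    rw [orderOf_eq_card_of_forall_mem_zpowers hg, Nat.card_eq_fintype_card, hcardU]
  have hordh : orderOf (g ^ (N / m)) = m := by
    rw [orderOf_pow, hordg]
    rw [Nat.gcd_eq_right (Nat.div_dvd_of_dvd hmN), Nat.div_div_self hmN hNpos.ne']
  have hordz : orderOf ((g ^ (N / m) : Fˣ) : F) = m := by
    rw [orderOf_units, hordh]
  have hprim : IsPrimitiveRoot ((g ^ (N / m) : Fˣ) : F) m := by
    have := IsPrimitiveRoot.orderOf ((g ^ (N / m) : Fˣ) : F)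
    rwa [hordz] at this
  exact hprim.card_nthRootsFinset

variable (F)

theorem periodic_points_description [Fintype F] (n : ℕ) (hn : 0 < n)
    (hF : Fintype.card F = 3 ^ n) (e : ℕ)
    (he : 2 ^ e ∣ 3 ^ n - 1 ∧ ¬ 2 ^ (e + 1) ∣ 3 ^ n - 1) :
    {x : OnePoint F | ∃ k : ℕ, 0 < k ∧ (theta F)^[k] x = x} =
      ({∞, ((1 : F) : OnePoint F), ((-1 : F) : OnePoint F)} ∪
        {α : OnePoint F | ∃ b : F, psi F α = (b : OnePoint F) ∧ Odd (orderOf b)}) ∧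
    {x : OnePoint F | ∃ k : ℕ, 0 < k ∧ (theta F)^[k] x = x}.ncard =
      (3 ^ n - 1) / 2 ^ e + 2 := by
  have h3 : (3:F) = 0 := by
    have hc := FiniteField.cast_card_eq_zero F
    rw [hF] at hc
    push_cast at hc
    exact pow_eq_zero_iff hn.ne' |>.1 hc
  set O : Set F := {x : F | Odd (orderOf x)} with hO
  set S : Set (OnePoint F) := {x : OnePoint F | ∃ k : ℕ, 0 < k ∧ (sMap F)^[k] x = x} with hS
  set P : Set (OnePoint F) := {x : OnePoint F | ∃ k : ℕ, 0 < k ∧ (theta F)^[k] x = x} with hP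
  set A : Set (OnePoint F) :=
    {α : OnePoint F | ∃ b : F, psi F α = (b : OnePoint F) ∧ Odd (orderOf b)} with hA
  have hPS : P = psi F '' S := thetaPer_eq_psi_preimage h3
  have hSval : S = {∞, Option.some 0} ∪ (Option.some '' O) := sPer_eq
  have hpsi0 : psi F (Option.some (0:F)) = Option.some (-1) := by simp [psi]
  have hpsiinf : psi F ∞ = Option.some 1 := rfl
  have hA_img : A = psi F '' (Option.some '' O) := by
    ext α
    constructor
    · rintro ⟨b, hb, hodd⟩
      refine ⟨Option.some b, ⟨b, hodd, rfl⟩, ?_⟩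
      have hb' : psi F α = Option.some b := hb
      rw [← hb', psi_psi h3]
    · rintro ⟨y, ⟨b, hodd, rfl⟩, rfl⟩
      exact ⟨b, psi_psi h3 _, hodd⟩
  have hinf_mem_A : ∞ ∈ A := ⟨1, rfl, by rw [orderOf_one]; exact odd_one⟩
  have himg : psi F '' S = {Option.some (1:F), Option.some (-1:F)} ∪ A := by
    erw [hSval, Set.image_union, Set.image_pair, hpsiinf, hpsi0, hA_img]
    rfl
  have hset : P = ({∞, ((1 : F) : OnePoint F), ((-1 : F) : OnePoint F)} ∪ A) := by
    rw [hPS, himg]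
    show {Option.some (1:F), Option.some (-1:F)} ∪ A =
      {∞, Option.some (1:F), Option.some (-1:F)} ∪ A
    conv_rhs => rw [show ({∞, Option.some (1:F), Option.some (-1:F)} : Set (OnePoint F)) =
      insert ∞ {Option.some (1:F), Option.some (-1:F)} from rfl, Set.insert_union]
    exact (Set.insert_eq_self.2 (Set.mem_union_right _ hinf_mem_A)).symm
  refine ⟨hset, ?_⟩
  have hcard : P.ncard = (3 ^ n - 1) / 2 ^ e + 2 := by
    have hinj : Function.Injective (psi F) := psi_injective h3
    rw [hPS, Set.ncard_image_of_injective _ hinj, hSval]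
    have hdisj : Disjoint ({∞, Option.some (0:F)} : Set (OnePoint F)) (Option.some '' O) := by
      rw [Set.disjoint_left]
      rintro a (rfl | rfl) ⟨b, hb, hba⟩
      · exact OnePoint.coe_ne_infty b hba
      · rw [op_some_inj] at hba
        exact not_odd_orderOf_zero (hba ▸ hb)
    erw [Set.ncard_union_eq hdisj (Set.toFinite _) (Set.toFinite _),
      Set.ncard_image_of_injective _ (Option.some_injective F),
      Set.ncard_pair (by exact OnePoint.infty_ne_coe 0 : (∞ : OnePoint F) ≠ Option.some 0),
      hO, odd_card n hn hF e he, add_comm]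
  exact hcard
end
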